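/- Let 𝒴 ⊂ ℝ be a finite set, let 𝒜, 𝒢₁, ℬ₁, 𝒢₂ be finite types, let p be a strictly positive probability mass function on 𝒴 × 𝒜 × 𝒢₁ × ℬ₁ × 𝒢₂, and fix a ∈ 𝒜. If G₁ ⊥ (A, G₂) | B₁ under p, then for every (g₁, b₁): ∑_{(y,a′,g₂)} p(y,a′,g₂ | g₁,b₁) · ( ψ_a^{B₁,G₂}(y,a′,b₁,g₂) − ψ_a^{(G₁,B₁),G₂}(y,a′,g₁,b₁,g₂) ) = 0; that is, the difference of the two influence functions has vanishing conditional expectation given (G₁, B₁). -/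

import Mathlib

/-! Conditional independence `G₁ ⊥ (A, G₂) | B₁` is the factorisation
`p(a, g₁, b₁, g₂) · p(b₁) = p(g₁, b₁) · p(a, b₁, g₂)`. It makes the two inverse-propensity weights
agree, `p(g₁, b₁) / p(a, g₁, b₁, g₂) = p(b₁) / p(a, b₁, g₂)`, so averaging `m_{GB}` over `g₁` with
weights `p(g₁, b₁)` gives `p(b₁) · m_B`. Hence `T^{GB} = T^B`, the terms of the two influence
functions that average over the first adjustment set agree, and
`ψ^B − ψ^{GB} = 1{a′ = a} · w(g₂) · (m_{GB} − m_B) + K` with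
`w(g₂) = p(g₁, b₁) p(g₂) / p(a, g₁, b₁, g₂)` and `K` a function of `(g₁, b₁)` only.
Conditioning on `(g₁, b₁)` multiplies `w(g₂)` by `p(a, g₁, b₁, g₂) / p(g₁, b₁)`, which turns the
first summand into `∑_{g₂} p(g₂) (m_{GB} − m_B) = −K`. -/

open Finset

noncomputable section

variable {Y : Finset ℝ} {A G₁ B₁ G₂ : Type}
variable [Fintype A] [Fintype G₁] [Fintype B₁] [Fintype G₂] [DecidableEq A]

/-- Marginal `p(g₁)`. -/
def pG1 (p : Y × A × G₁ × B₁ × G₂ → ℝ) (g₁ : G₁) : ℝ :=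
  ∑ y : Y, ∑ a : A, ∑ b₁ : B₁, ∑ g₂ : G₂, p (y, a, g₁, b₁, g₂)

/-- Marginal `p(b₁)`. -/
def pB1 (p : Y × A × G₁ × B₁ × G₂ → ℝ) (b₁ : B₁) : ℝ :=
  ∑ y : Y, ∑ a : A, ∑ g₁ : G₁, ∑ g₂ : G₂, p (y, a, g₁, b₁, g₂)

/-- Marginal `p(g₂)`. -/
def pG2 (p : Y × A × G₁ × B₁ × G₂ → ℝ) (g₂ : G₂) : ℝ :=
  ∑ y : Y, ∑ a : A, ∑ g₁ : G₁, ∑ b₁ : B₁, p (y, a, g₁, b₁, g₂)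

/-- Marginal `p(g₁, b₁)`. -/
def pG1B1 (p : Y × A × G₁ × B₁ × G₂ → ℝ) (g₁ : G₁) (b₁ : B₁) : ℝ :=
  ∑ y : Y, ∑ a : A, ∑ g₂ : G₂, p (y, a, g₁, b₁, g₂)

/-- Marginal `p(a, b₁, g₂)`. -/
def pAB1G2 (p : Y × A × G₁ × B₁ × G₂ → ℝ) (a : A) (b₁ : B₁) (g₂ : G₂) : ℝ :=
  ∑ y : Y, ∑ g₁ : G₁, p (y, a, g₁, b₁, g₂)

/-- Marginal `p(a, g₁, b₁, g₂)`. -/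
def pAG1B1G2 (p : Y × A × G₁ × B₁ × G₂ → ℝ) (a : A) (g₁ : G₁) (b₁ : B₁) (g₂ : G₂) : ℝ :=
  ∑ y : Y, p (y, a, g₁, b₁, g₂)

/-- Marginal `p(a, g₁, g₂)`. -/
def pAG1G2 (p : Y × A × G₁ × B₁ × G₂ → ℝ) (a : A) (g₁ : G₁) (g₂ : G₂) : ℝ :=
  ∑ y : Y, ∑ b₁ : B₁, p (y, a, g₁, b₁, g₂)

/-- Outcome regression `m_B(b₁,g₂) = ∑_y y·p(y | a, b₁, g₂)` for the
adjustment set `(B₁, G₂)`. -/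
def mB (p : Y × A × G₁ × B₁ × G₂ → ℝ) (a : A) (b₁ : B₁) (g₂ : G₂) : ℝ :=
  ∑ y : Y, (y : ℝ) * ((∑ g₁ : G₁, p (y, a, g₁, b₁, g₂)) / pAB1G2 p a b₁ g₂)

/-- Outcome regression `m_{GB}(g₁,b₁,g₂) = ∑_y y·p(y | a, g₁, b₁, g₂)` for
the adjustment set `((G₁, B₁), G₂)`. -/
def mGB (p : Y × A × G₁ × B₁ × G₂ → ℝ) (a : A) (g₁ : G₁) (b₁ : B₁) (g₂ : G₂) : ℝ :=
  ∑ y : Y, (y : ℝ) * (p (y, a, g₁, b₁, g₂) / pAG1B1G2 p a g₁ b₁ g₂)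

/-- Outcome regression `m_{GG}(g₁,g₂) = ∑_y y·p(y | a, g₁, g₂)` for the
adjustment set `(G₁, G₂)`. -/
def mGG (p : Y × A × G₁ × B₁ × G₂ → ℝ) (a : A) (g₁ : G₁) (g₂ : G₂) : ℝ :=
  ∑ y : Y, (y : ℝ) * ((∑ b₁ : B₁, p (y, a, g₁, b₁, g₂)) / pAG1G2 p a g₁ g₂)

/-- Target parameter for the adjustment set `(B₁, G₂)`. -/
def TB (p : Y × A × G₁ × B₁ × G₂ → ℝ) (a : A) : ℝ :=
  ∑ b₁ : B₁, pB1 p b₁ * ∑ g₂ : G₂, pG2 p g₂ * mB p a b₁ g₂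

/-- Target parameter for the adjustment set `((G₁, B₁), G₂)`. -/
def TGB (p : Y × A × G₁ × B₁ × G₂ → ℝ) (a : A) : ℝ :=
  ∑ g₁ : G₁, ∑ b₁ : B₁, pG1B1 p g₁ b₁ * ∑ g₂ : G₂, pG2 p g₂ * mGB p a g₁ b₁ g₂

/-- Target parameter for the adjustment set `(G₁, G₂)`. -/
def TGG (p : Y × A × G₁ × B₁ × G₂ → ℝ) (a : A) : ℝ :=
  ∑ g₁ : G₁, pG1 p g₁ * ∑ g₂ : G₂, pG2 p g₂ * mGG p a g₁ g₂

/-- Influence function `ψ_a^{B₁,G₂}` for the adjustment set `(B₁, G₂)`. -/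
def psiB (p : Y × A × G₁ × B₁ × G₂ → ℝ) (a : A)
    (y : Y) (a' : A) (b₁ : B₁) (g₂ : G₂) : ℝ :=
  (if a' = a then (1 : ℝ) else 0) * (pB1 p b₁ * pG2 p g₂ / pAB1G2 p a b₁ g₂) *
      ((y : ℝ) - mB p a b₁ g₂)
    + (∑ g₂' : G₂, pG2 p g₂' * mB p a b₁ g₂')
    + (∑ b₁' : B₁, pB1 p b₁' * mB p a b₁' g₂)
    - 2 * TB p a

/-- Influence function `ψ_a^{(G₁,B₁),G₂}` for the adjustment set `((G₁, B₁), G₂)`. -/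
def psiGB (p : Y × A × G₁ × B₁ × G₂ → ℝ) (a : A)
    (y : Y) (a' : A) (g₁ : G₁) (b₁ : B₁) (g₂ : G₂) : ℝ :=
  (if a' = a then (1 : ℝ) else 0) *
      (pG1B1 p g₁ b₁ * pG2 p g₂ / pAG1B1G2 p a g₁ b₁ g₂) *
      ((y : ℝ) - mGB p a g₁ b₁ g₂)
    + (∑ g₂' : G₂, pG2 p g₂' * mGB p a g₁ b₁ g₂')
    + (∑ g₁' : G₁, ∑ b₁' : B₁, pG1B1 p g₁' b₁' * mGB p a g₁' b₁' g₂)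
    - 2 * TGB p a

/-- Influence function `ψ_a^{G₁,G₂}` for the adjustment set `(G₁, G₂)`. -/
def psiGG (p : Y × A × G₁ × B₁ × G₂ → ℝ) (a : A)
    (y : Y) (a' : A) (g₁ : G₁) (g₂ : G₂) : ℝ :=
  (if a' = a then (1 : ℝ) else 0) * (pG1 p g₁ * pG2 p g₂ / pAG1G2 p a g₁ g₂) *
      ((y : ℝ) - mGG p a g₁ g₂)
    + (∑ g₂' : G₂, pG2 p g₂' * mGG p a g₁ g₂')
    + (∑ g₁' : G₁, pG1 p g₁' * mGG p a g₁' g₂)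
    - 2 * TGG p a

/-- Conditional independence `G₁ ⊥ (A, G₂) | B₁` under `p`. -/
def CI_G1_AG2_B1 (p : Y × A × G₁ × B₁ × G₂ → ℝ) : Prop :=
  ∀ (g₁ : G₁) (a : A) (g₂ : G₂) (b₁ : B₁),
    (∑ y : Y, p (y, a, g₁, b₁, g₂)) / pB1 p b₁ =
      (pG1B1 p g₁ b₁ / pB1 p b₁) * (pAB1G2 p a b₁ g₂ / pB1 p b₁)

/-- Conditional independence `Y ⊥ B₁ | (A, G₁, G₂)` under `p`. -/
def CI_Y_B1_AG1G2 (p : Y × A × G₁ × B₁ × G₂ → ℝ) : Prop :=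
  ∀ (y : Y) (a : A) (g₁ : G₁) (b₁ : B₁) (g₂ : G₂),
    p (y, a, g₁, b₁, g₂) / pAG1G2 p a g₁ g₂ =
      ((∑ b₁' : B₁, p (y, a, g₁, b₁', g₂)) / pAG1G2 p a g₁ g₂) *
        (pAG1B1G2 p a g₁ b₁ g₂ / pAG1G2 p a g₁ g₂)

/-- Variance of a real function of the observation under `p`. -/
def VarP (p : Y × A × G₁ × B₁ × G₂ → ℝ) (f : Y × A × G₁ × B₁ × G₂ → ℝ) : ℝ :=
  (∑ o : Y × A × G₁ × B₁ × G₂, p o * f o ^ 2) -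
    (∑ o : Y × A × G₁ × B₁ × G₂, p o * f o) ^ 2


private theorem sum_univ_pos {ι : Type*} [Fintype ι] [Nonempty ι] {f : ι → ℝ}
    (hf : ∀ i, 0 < f i) : 0 < ∑ i, f i :=
  Finset.sum_pos (fun i _ => hf i) univ_nonempty

section Marginals

variable {p : Y × A × G₁ × B₁ × G₂ → ℝ}

omit [Fintype B₁] [DecidableEq A] in
theorem pB1_pos [Nonempty Y] [Nonempty A] [Nonempty G₁] [Nonempty G₂]
    (hpos : ∀ o, 0 < p o) (b₁ : B₁) : 0 < pB1 p b₁ :=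
  sum_univ_pos fun _ => sum_univ_pos fun _ => sum_univ_pos fun _ => sum_univ_pos fun _ => hpos _

omit [Fintype G₁] [Fintype B₁] [DecidableEq A] in
theorem pG1B1_pos [Nonempty Y] [Nonempty A] [Nonempty G₂]
    (hpos : ∀ o, 0 < p o) (g₁ : G₁) (b₁ : B₁) : 0 < pG1B1 p g₁ b₁ :=
  sum_univ_pos fun _ => sum_univ_pos fun _ => sum_univ_pos fun _ => hpos _

omit [Fintype A] [Fintype B₁] [Fintype G₂] [DecidableEq A] in
theorem pAB1G2_pos [Nonempty Y] [Nonempty G₁]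
    (hpos : ∀ o, 0 < p o) (a : A) (b₁ : B₁) (g₂ : G₂) : 0 < pAB1G2 p a b₁ g₂ :=
  sum_univ_pos fun _ => sum_univ_pos fun _ => hpos _

omit [Fintype A] [Fintype G₁] [Fintype B₁] [Fintype G₂] [DecidableEq A] in
theorem pAG1B1G2_pos [Nonempty Y]
    (hpos : ∀ o, 0 < p o) (a : A) (g₁ : G₁) (b₁ : B₁) (g₂ : G₂) : 0 < pAG1B1G2 p a g₁ b₁ g₂ :=
  sum_univ_pos fun _ => hpos _

end Marginals

namespace CI_G1_AG2_B1

variable {p : Y × A × G₁ × B₁ × G₂ → ℝ}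

omit [Fintype B₁] [DecidableEq A] in
theorem pAG1B1G2_mul_pB1 (hCI : CI_G1_AG2_B1 p) {b₁ : B₁} (hb₁ : pB1 p b₁ ≠ 0)
    (a : A) (g₁ : G₁) (g₂ : G₂) :
    pAG1B1G2 p a g₁ b₁ g₂ * pB1 p b₁ = pG1B1 p g₁ b₁ * pAB1G2 p a b₁ g₂ := by
  have h := hCI g₁ a g₂ b₁
  rw [div_mul_div_comm, div_eq_div_iff hb₁ (mul_ne_zero hb₁ hb₁)] at h
  exact mul_right_cancel₀ hb₁ (by rw [pAG1B1G2]; linear_combination h)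

variable [Nonempty Y] [Nonempty A] [Nonempty G₁] [Nonempty G₂]

omit [Fintype B₁] [DecidableEq A] in
theorem pG1B1_div_pAG1B1G2 (hCI : CI_G1_AG2_B1 p) (hpos : ∀ o, 0 < p o)
    (a : A) (g₁ : G₁) (b₁ : B₁) (g₂ : G₂) :
    pG1B1 p g₁ b₁ / pAG1B1G2 p a g₁ b₁ g₂ = pB1 p b₁ / pAB1G2 p a b₁ g₂ := by
  rw [div_eq_div_iff (pAG1B1G2_pos hpos a g₁ b₁ g₂).ne' (pAB1G2_pos hpos a b₁ g₂).ne',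
    mul_comm (pB1 p b₁), hCI.pAG1B1G2_mul_pB1 (pB1_pos hpos b₁).ne']

omit [Fintype B₁] [DecidableEq A] in
theorem sum_pG1B1_mul_mGB (hCI : CI_G1_AG2_B1 p) (hpos : ∀ o, 0 < p o)
    (a : A) (b₁ : B₁) (g₂ : G₂) :
    ∑ g₁ : G₁, pG1B1 p g₁ b₁ * mGB p a g₁ b₁ g₂ = pB1 p b₁ * mB p a b₁ g₂ := by
  calc ∑ g₁ : G₁, pG1B1 p g₁ b₁ * mGB p a g₁ b₁ g₂
      = ∑ g₁ : G₁, ∑ y : Y,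
          (y : ℝ) * p (y, a, g₁, b₁, g₂) * (pG1B1 p g₁ b₁ / pAG1B1G2 p a g₁ b₁ g₂) := by
        simp only [mGB, Finset.mul_sum]
        exact Finset.sum_congr rfl fun _ _ => Finset.sum_congr rfl fun _ _ => by ring
    _ = ∑ g₁ : G₁, ∑ y : Y, (y : ℝ) * p (y, a, g₁, b₁, g₂) * (pB1 p b₁ / pAB1G2 p a b₁ g₂) := by
        simp only [hCI.pG1B1_div_pAG1B1G2 hpos]
    _ = pB1 p b₁ * mB p a b₁ g₂ := by
        rw [Finset.sum_comm]
        simp only [mB, Finset.mul_sum, Finset.sum_div]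
        exact Finset.sum_congr rfl fun _ _ => Finset.sum_congr rfl fun _ _ => by ring

omit [DecidableEq A] in
theorem TGB_eq_TB (hCI : CI_G1_AG2_B1 p) (hpos : ∀ o, 0 < p o) (a : A) : TGB p a = TB p a := by
  calc TGB p a
      = ∑ b₁ : B₁, ∑ g₂ : G₂, pG2 p g₂ * ∑ g₁ : G₁, pG1B1 p g₁ b₁ * mGB p a g₁ b₁ g₂ := by
        rw [TGB, Finset.sum_comm]
        refine Finset.sum_congr rfl fun b₁ _ => ?_
        simp only [Finset.mul_sum]
        rw [Finset.sum_comm]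
        exact Finset.sum_congr rfl fun _ _ => Finset.sum_congr rfl fun _ _ => by ring
    _ = TB p a := by
        simp only [hCI.sum_pG1B1_mul_mGB hpos, TB, Finset.mul_sum]
        exact Finset.sum_congr rfl fun _ _ => Finset.sum_congr rfl fun _ _ => by ring

theorem psiB_sub_psiGB (hCI : CI_G1_AG2_B1 p) (hpos : ∀ o, 0 < p o) (a : A)
    (y : Y) (a' : A) (g₁ : G₁) (b₁ : B₁) (g₂ : G₂) :
    psiB p a y a' b₁ g₂ - psiGB p a y a' g₁ b₁ g₂ =
      (if a' = a then 1 else 0) *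
          (pG1B1 p g₁ b₁ * pG2 p g₂ / pAG1B1G2 p a g₁ b₁ g₂ *
            (mGB p a g₁ b₁ g₂ - mB p a b₁ g₂)) +
        ((∑ g₂' : G₂, pG2 p g₂' * mB p a b₁ g₂') - ∑ g₂' : G₂, pG2 p g₂' * mGB p a g₁ b₁ g₂') := by
  have hcovariate : pG1B1 p g₁ b₁ * pG2 p g₂ / pAG1B1G2 p a g₁ b₁ g₂ =
      pB1 p b₁ * pG2 p g₂ / pAB1G2 p a b₁ g₂ := by
    rw [mul_div_right_comm, hCI.pG1B1_div_pAG1B1G2 hpos, mul_div_right_comm]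
  have hmarginal : ∑ g₁' : G₁, ∑ b₁' : B₁, pG1B1 p g₁' b₁' * mGB p a g₁' b₁' g₂ =
      ∑ b₁' : B₁, pB1 p b₁' * mB p a b₁' g₂ := by
    rw [Finset.sum_comm]
    simp only [hCI.sum_pG1B1_mul_mGB hpos]
  rw [psiB, psiGB, hCI.TGB_eq_TB hpos, hmarginal, hcovariate]
  ring

end CI_G1_AG2_B1

section ConditionalExpectation

def condExpG1B1 (p : Y × A × G₁ × B₁ × G₂ → ℝ) (g₁ : G₁) (b₁ : B₁) (f : Y → A → G₂ → ℝ) : ℝ :=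
  ∑ y : Y, ∑ a' : A, ∑ g₂ : G₂, p (y, a', g₁, b₁, g₂) / pG1B1 p g₁ b₁ * f y a' g₂

variable {p : Y × A × G₁ × B₁ × G₂ → ℝ} {g₁ : G₁} {b₁ : B₁}

omit [Fintype G₁] [Fintype B₁]

omit [DecidableEq A] in
theorem condExpG1B1_add (f g : Y → A → G₂ → ℝ) :
    condExpG1B1 p g₁ b₁ (fun y a' g₂ => f y a' g₂ + g y a' g₂) =
      condExpG1B1 p g₁ b₁ f + condExpG1B1 p g₁ b₁ g := by
  simp only [condExpG1B1, mul_add, Finset.sum_add_distrib]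

omit [DecidableEq A] in
theorem condExpG1B1_const (h : pG1B1 p g₁ b₁ ≠ 0) (c : ℝ) :
    condExpG1B1 p g₁ b₁ (fun _ _ _ => c) = c := by
  simp only [condExpG1B1, ← Finset.sum_mul, ← Finset.sum_div]
  rw [← pG1B1, div_self h, one_mul]

theorem condExpG1B1_ite_mul (a : A) (h : G₂ → ℝ) :
    condExpG1B1 p g₁ b₁ (fun _ a' g₂ => (if a' = a then 1 else 0) * h g₂) =
      ∑ g₂ : G₂, pAG1B1G2 p a g₁ b₁ g₂ / pG1B1 p g₁ b₁ * h g₂ := by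
  calc condExpG1B1 p g₁ b₁ (fun _ a' g₂ => (if a' = a then 1 else 0) * h g₂)
      = ∑ y : Y, ∑ g₂ : G₂, p (y, a, g₁, b₁, g₂) / pG1B1 p g₁ b₁ * h g₂ := by
        refine Finset.sum_congr rfl fun y _ => ?_
        rw [Finset.sum_comm]
        simp only [ite_mul, one_mul, zero_mul, mul_ite, mul_zero, Finset.sum_ite_eq', Finset.mem_univ,
          if_true]
    _ = ∑ g₂ : G₂, pAG1B1G2 p a g₁ b₁ g₂ / pG1B1 p g₁ b₁ * h g₂ := by
        rw [Finset.sum_comm]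
        simp only [← Finset.sum_mul, ← Finset.sum_div, pAG1B1G2]

end ConditionalExpectation

theorem psi_difference_condExp_G1B1_general
    (p : Y × A × G₁ × B₁ × G₂ → ℝ)
    (hpos : ∀ o, 0 < p o) (a : A)
    (hCI : CI_G1_AG2_B1 p) :
    ∀ (g₁ : G₁) (b₁ : B₁),
      ∑ y : Y, ∑ a' : A, ∑ g₂ : G₂,
        (p (y, a', g₁, b₁, g₂) / pG1B1 p g₁ b₁) *
          (psiB p a y a' b₁ g₂ - psiGB p a y a' g₁ b₁ g₂) = 0 := by
  intro g₁ b₁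
  rcases isEmpty_or_nonempty Y with hY | hY
  · simp
  rcases isEmpty_or_nonempty A with hA | hA
  · simp
  rcases isEmpty_or_nonempty G₂ with hG₂ | hG₂
  · simp
  have : Nonempty G₁ := ⟨g₁⟩
  have hg₁b₁ := (pG1B1_pos hpos g₁ b₁).ne'
  change condExpG1B1 p g₁ b₁ (fun y a' g₂ => psiB p a y a' b₁ g₂ - psiGB p a y a' g₁ b₁ g₂) = 0
  simp only [hCI.psiB_sub_psiGB hpos]
  rw [condExpG1B1_add, condExpG1B1_ite_mul, condExpG1B1_const hg₁b₁]
  have hweight (g₂ : G₂) (d : ℝ) : pAG1B1G2 p a g₁ b₁ g₂ / pG1B1 p g₁ b₁ *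
      (pG1B1 p g₁ b₁ * pG2 p g₂ / pAG1B1G2 p a g₁ b₁ g₂ * d) = pG2 p g₂ * d := by
    have := (pAG1B1G2_pos hpos a g₁ b₁ g₂).ne'
    field_simp
  simp only [hweight, mul_sub, Finset.sum_sub_distrib]
  ring

/-- First orthogonality condition in the proof of Lemma 4.3: given
`G₁ ⊥ (A, G₂) | B₁`, the difference of the two influence functions has
vanishing conditional expectation given `(G₁, B₁)`. -/
theorem psi_difference_condExp_G1B1
    (p : Y × A × G₁ × B₁ × G₂ → ℝ)
    (hpos : ∀ o, 0 < p o) (hsum : ∑ o, p o = 1) (a : A)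
    (hCI : CI_G1_AG2_B1 p) :
    ∀ (g₁ : G₁) (b₁ : B₁),
      ∑ y : Y, ∑ a' : A, ∑ g₂ : G₂,
        (p (y, a', g₁, b₁, g₂) / pG1B1 p g₁ b₁) *
          (psiB p a y a' b₁ g₂ - psiGB p a y a' g₁ b₁ g₂) = 0 :=
  psi_difference_condExp_G1B1_general p hpos a hCI

end
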